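/- Let P be a row-stochastic N×N real matrix with stationary distribution w, and let ϖ be any probability row vector. Then for every n ≥ 0, ‖ϖᵀPⁿ − wᵀ‖₁ ≤ τ₁(P)ⁿ · ‖ϖ − w‖₁. -/

import Mathlib

/-!
For `v` of zero sum, duality gives `‖vP‖₁ = v ⬝ (Pσ)` with `σ` the sign vector of `vP`. Any two
entries of `Pσ` differ by at most `Σₖ |P i k - P j k| ≤ 2 τ₁(P)`, so `Pσ` lies within `τ₁(P)` of
some constant `c`; as `Σ v = 0`, `v ⬝ (Pσ) = v ⬝ (Pσ - c) ≤ τ₁(P) ‖v‖₁`. Row sums equal to `1`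
keep the sum of `vP` zero, so this iterates, and stationarity of `w` gives
`ϖPⁿ - w = (ϖ - w)Pⁿ`.
-/

/-- Coefficient of ergodicity τ₁ of a row-stochastic matrix. -/
noncomputable def tau1 {N : ℕ} (P : Matrix (Fin N) (Fin N) ℝ) : ℝ :=
  (1 / 2) * ⨆ i, ⨆ j, ∑ k, |P i k - P j k|

open Finset Matrix

theorem exists_forall_abs_sub_le_of_forall_abs_sub_le {ι α : Type*} [Finite ι] [Field α]
    [LinearOrder α] [IsStrictOrderedRing α] (f : ι → α) {r : α}
    (hf : ∀ i k, |f i - f k| ≤ 2 * r) : ∃ c, ∀ i, |f i - c| ≤ r := by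
  cases isEmpty_or_nonempty ι
  · exact ⟨0, isEmptyElim⟩
  obtain ⟨iMax, hMax⟩ := Finite.exists_max f
  obtain ⟨iMin, hMin⟩ := Finite.exists_min f
  have hspread := (le_abs_self _).trans (hf iMax iMin)
  refine ⟨(f iMax + f iMin) / 2, fun i => abs_sub_le_iff.2 ⟨?_, ?_⟩⟩
  · linarith [hMax i]
  · linarith [hMin i]

theorem abs_sign_le_one {α : Type*} [Ring α] [LinearOrder α] [IsStrictOrderedRing α] (x : α) :
    |(SignType.sign x : α)| ≤ 1 := by
  rcases lt_trichotomy x 0 with h | h | h <;> simp [h]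

theorem sum_vecMul_of_sum_row_eq_one {m n R : Type*} [Fintype m] [Fintype n]
    [NonAssocSemiring R] {P : Matrix m n R} (hP : ∀ i, ∑ j, P i j = 1) (v : m → R) :
    ∑ j, (v ᵥ* P) j = ∑ i, v i := by
  simp only [vecMul, dotProduct]
  rw [sum_comm]
  simp [← mul_sum, hP]

theorem vecMul_pow_eq_self {ι R : Type*} [Fintype ι] [DecidableEq ι] [Semiring R]
    {M : Matrix ι ι R} {v : ι → R} (hv : v ᵥ* M = v) (n : ℕ) : v ᵥ* M ^ n = v := by
  induction n with
  | zero => simp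
  | succ n ih => rw [pow_succ, ← vecMul_vecMul, ih, hv]

section Ergodicity

variable {N : ℕ} (P : Matrix (Fin N) (Fin N) ℝ)

theorem tau1_nonneg : 0 ≤ tau1 P :=
  mul_nonneg (by norm_num) <| Real.iSup_nonneg fun _ => Real.iSup_nonneg fun _ =>
    sum_nonneg fun _ _ => abs_nonneg _

theorem sum_abs_sub_le_two_mul_tau1 (i j : Fin N) :
    ∑ k, |P i k - P j k| ≤ 2 * tau1 P :=
  calc ∑ k, |P i k - P j k| ≤ ⨆ j', ∑ k, |P i k - P j' k| :=
        le_ciSup (f := fun j' => ∑ k, |P i k - P j' k|) (Set.finite_range _).bddAbove j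
    _ ≤ ⨆ i', ⨆ j', ∑ k, |P i' k - P j' k| :=
        le_ciSup (f := fun i' => ⨆ j', ∑ k, |P i' k - P j' k|) (Set.finite_range _).bddAbove i
    _ = 2 * tau1 P := by rw [tau1]; ring

theorem abs_mulVec_sub_mulVec_le {σ : Fin N → ℝ} (hσ : ∀ j, |σ j| ≤ 1) (i k : Fin N) :
    |(P *ᵥ σ) i - (P *ᵥ σ) k| ≤ 2 * tau1 P :=
  calc |(P *ᵥ σ) i - (P *ᵥ σ) k| = |∑ j, (P i j - P k j) * σ j| := by
        simp only [mulVec, dotProduct, sub_mul, sum_sub_distrib]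
    _ ≤ ∑ j, |P i j - P k j| * |σ j| := by
        simpa only [abs_mul] using abs_sum_le_sum_abs (fun j => (P i j - P k j) * σ j) univ
    _ ≤ ∑ j, |P i j - P k j| :=
        sum_le_sum fun j _ => mul_le_of_le_one_right (abs_nonneg _) (hσ j)
    _ ≤ 2 * tau1 P := sum_abs_sub_le_two_mul_tau1 P i k

theorem sum_abs_vecMul_le {v : Fin N → ℝ} (hv : ∑ i, v i = 0) :
    ∑ j, |(v ᵥ* P) j| ≤ tau1 P * ∑ i, |v i| := by
  set σ : Fin N → ℝ := fun j => SignType.sign ((v ᵥ* P) j)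
  obtain ⟨c, hc⟩ := exists_forall_abs_sub_le_of_forall_abs_sub_le (P *ᵥ σ)
    (abs_mulVec_sub_mulVec_le P fun j => abs_sign_le_one _)
  calc ∑ j, |(v ᵥ* P) j| = v ⬝ᵥ (P *ᵥ σ) := by
        rw [dotProduct_mulVec]
        simp only [dotProduct, σ, self_mul_sign]
    _ = ∑ i, v i * ((P *ᵥ σ) i - c) := by
        simp only [dotProduct, mul_sub, sum_sub_distrib, ← sum_mul, hv, zero_mul, sub_zero]
    _ ≤ ∑ i, |v i| * tau1 P := sum_le_sum fun i _ =>
        (le_abs_self _).trans <| (abs_mul _ _).trans_le <|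
          mul_le_mul_of_nonneg_left (hc i) (abs_nonneg (v i))
    _ = tau1 P * ∑ i, |v i| := by rw [← sum_mul, mul_comm]

theorem sum_abs_vecMul_pow_le (hP : ∀ i, ∑ j, P i j = 1) {v : Fin N → ℝ}
    (hv : ∑ i, v i = 0) (n : ℕ) :
    ∑ j, |(v ᵥ* P ^ n) j| ≤ tau1 P ^ n * ∑ i, |v i| := by
  induction n generalizing v with
  | zero => simp
  | succ n ih =>
    have hvP : ∑ j, (v ᵥ* P) j = 0 := (sum_vecMul_of_sum_row_eq_one hP v).trans hv
    calc ∑ j, |(v ᵥ* P ^ (n + 1)) j| = ∑ j, |(v ᵥ* P ᵥ* P ^ n) j| := by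
          rw [vecMul_vecMul, pow_succ']
      _ ≤ tau1 P ^ n * ∑ j, |(v ᵥ* P) j| := ih hvP
      _ ≤ tau1 P ^ n * (tau1 P * ∑ i, |v i|) :=
          mul_le_mul_of_nonneg_left (sum_abs_vecMul_le P hv) (pow_nonneg (tau1_nonneg P) n)
      _ = tau1 P ^ (n + 1) * ∑ i, |v i| := by ring

end Ergodicity

theorem power_contraction_general {N : ℕ}
    (P : Matrix (Fin N) (Fin N) ℝ)
    (hProw : ∀ i, ∑ j, P i j = 1)
    (w : Fin N → ℝ) (hwsum : ∑ i, w i = 1)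
    (hwstat : ∀ j, ∑ i, w i * P i j = w j)
    (ϖ : Fin N → ℝ) (hϖsum : ∑ i, ϖ i = 1)
    (n : ℕ) :
    ∑ j, |(∑ i, ϖ i * (P ^ n) i j) - w j| ≤ tau1 P ^ n * ∑ i, |ϖ i - w i| := by
  have hw : w ᵥ* P = w := funext hwstat
  have hsum : ∑ i, (ϖ - w) i = 0 := by
    simp only [Pi.sub_apply, sum_sub_distrib, hϖsum, hwsum, sub_self]
  have hdiff : (ϖ - w) ᵥ* P ^ n = fun j => (∑ i, ϖ i * (P ^ n) i j) - w j := by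
    rw [sub_vecMul, vecMul_pow_eq_self hw]
    rfl
  simpa only [hdiff, Pi.sub_apply] using sum_abs_vecMul_pow_le P hProw hsum n

/-- Geometric convergence to the stationary distribution:
`‖ϖᵀPⁿ − wᵀ‖₁ ≤ τ₁(P)ⁿ · ‖ϖ − w‖₁`. -/
theorem power_contraction {N : ℕ} [NeZero N]
    (P : Matrix (Fin N) (Fin N) ℝ)
    (hPnn : ∀ i j, 0 ≤ P i j) (hProw : ∀ i, ∑ j, P i j = 1)
    (w : Fin N → ℝ) (hwnn : ∀ i, 0 ≤ w i) (hwsum : ∑ i, w i = 1)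
    (hwstat : ∀ j, ∑ i, w i * P i j = w j)
    (ϖ : Fin N → ℝ) (hϖnn : ∀ i, 0 ≤ ϖ i) (hϖsum : ∑ i, ϖ i = 1)
    (n : ℕ) :
    ∑ j, |(∑ i, ϖ i * (P ^ n) i j) - w j| ≤ tau1 P ^ n * ∑ i, |ϖ i - w i| :=
  power_contraction_general P hProw w hwsum hwstat ϖ hϖsum n
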